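/- Let t be an integer with t ≥ 2. There exists a (t,3) broadcast S ⊆ ℤ×ℤ whose density exists and is at most 1/(2(t−1)² − 2(t−1) + 1); in other words, the optimal (t,3) broadcast density is at most the optimal (t−1,1) broadcast density 1/(2(t−1)² − 2(t−1) + 1). -/

import Mathlib

open Filter Topology

/-- Graph (L¹) distance on the infinite grid ℤ×ℤ. -/
def gridDist (u v : ℤ × ℤ) : ℕ := (u.1 - v.1).natAbs + (u.2 - v.2).natAbs

open Classical in
/-- Total signal received at `v` from towers of strength `t` located at the points of `S`:
the finite sum `∑_{T ∈ S, dist(v,T) < t} (t − dist(v,T))`. -/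
noncomputable def totalSignal (t : ℕ) (S : Set (ℤ × ℤ)) (v : ℤ × ℤ) : ℕ :=
  ∑ T ∈ (Finset.Icc (v.1 - (t : ℤ)) (v.1 + (t : ℤ)) ×ˢ
      Finset.Icc (v.2 - (t : ℤ)) (v.2 + (t : ℤ))).filter
      (fun T => T ∈ S ∧ gridDist v T < t),
    (t - gridDist v T)

/-- `S` is a `(t,r)` broadcast if every vertex receives total signal at least `r`. -/
def IsBroadcast (t r : ℕ) (S : Set (ℤ × ℤ)) : Prop :=
  ∀ v : ℤ × ℤ, r ≤ totalSignal t S v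

/-- The standard pattern `T(d,e) = {(dx+ey, y) : x, y ∈ ℤ}`. -/
def stdPattern (d e : ℤ) : Set (ℤ × ℤ) := {p | ∃ x y : ℤ, p = (d * x + e * y, y)}

open Classical in
/-- The number of points of `S` in the square `V_n = {(a,b) : |a| ≤ n, |b| ≤ n}`. -/
noncomputable def gridCount (S : Set (ℤ × ℤ)) (n : ℕ) : ℕ :=
  ((Finset.Icc (-(n : ℤ)) (n : ℤ) ×ˢ Finset.Icc (-(n : ℤ)) (n : ℤ)).filter
    (fun v => v ∈ S)).card

/-
A `(t - 1, 1)` broadcast `S`, i.e. a set with every vertex at distance at most `t - 2` from it,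
is already a `(t, 3)` broadcast. A vertex at distance at most `t - 3` from a tower receives `3`
from it. A vertex `v` at distance exactly `t - 2` from its nearest tower `T` has a neighbour `w`
farther away from `T`; the tower covering `w` is then a second tower within distance `t - 1` of
`v`, and `v` receives `2 + 1`.

For `r = t - 2`, the lattice `x ≡ (2r+1) y (mod d)` with `d = 2r² + 2r + 1` is such a covering: the
translates of the L¹-ball of radius `r` (which has `d` points) by lattice vectors are pairwise
disjoint, so, having as many points as there are residues mod `d`, they tile `ℤ × ℤ`. Counting
residues row by row shows that the lattice has density `1 / d = 1 / (2(t-1)² - 2(t-1) + 1)`.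
-/

open Finset

lemma gridDist_triangle (u v w : ℤ × ℤ) : gridDist u w ≤ gridDist u v + gridDist v w := by
  unfold gridDist; omega

lemma exists_gridDist_eq_one_gridDist_eq_add_one (v T : ℤ × ℤ) :
    ∃ w, gridDist v w = 1 ∧ gridDist w T = gridDist v T + 1 := by
  by_cases h : T.1 ≤ v.1
  · exact ⟨(v.1 + 1, v.2), by unfold gridDist; omega, by unfold gridDist; omega⟩
  · exact ⟨(v.1 - 1, v.2), by unfold gridDist; omega, by unfold gridDist; omega⟩

open Classical in
lemma sum_le_totalSignal {t : ℕ} {S : Set (ℤ × ℤ)} {v : ℤ × ℤ} {F : Finset (ℤ × ℤ)}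
    (hF : ∀ T ∈ F, T ∈ S ∧ gridDist v T < t) :
    ∑ T ∈ F, (t - gridDist v T) ≤ totalSignal t S v := by
  refine sum_le_sum_of_subset fun T hT => ?_
  obtain ⟨hTS, hvT⟩ := hF T hT
  refine mem_filter.2 ⟨mem_product.2 ⟨mem_Icc.2 ?_, mem_Icc.2 ?_⟩, hTS, hvT⟩ <;>
    unfold gridDist at hvT <;> omega

lemma isBroadcast_one_iff {t : ℕ} {S : Set (ℤ × ℤ)} :
    IsBroadcast t 1 S ↔ ∀ v, ∃ T ∈ S, gridDist v T < t := by
  classical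
  refine forall_congr' fun v => ⟨fun h => ?_, fun ⟨T, hTS, hvT⟩ => ?_⟩
  · obtain ⟨T, hT, -⟩ := exists_ne_zero_of_sum_ne_zero (Nat.one_le_iff_ne_zero.1 h)
    exact ⟨T, (mem_filter.1 hT).2⟩
  · calc 1 ≤ ∑ T ∈ {T}, (t - gridDist v T) := by rw [sum_singleton]; omega
      _ ≤ totalSignal t S v := sum_le_totalSignal (by simpa using ⟨hTS, hvT⟩)

theorem IsBroadcast.succ_three_of_one {t : ℕ} {S : Set (ℤ × ℤ)} (h : IsBroadcast t 1 S) :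
    IsBroadcast (t + 1) 3 S := by
  intro v
  obtain ⟨T, hTS, hvT⟩ := isBroadcast_one_iff.1 h v
  have hsingle : t + 1 - gridDist v T ≤ totalSignal (t + 1) S v := by
    simpa only [sum_singleton] using
      sum_le_totalSignal (F := {T}) fun X hX => (mem_singleton.1 hX) ▸ ⟨hTS, by omega⟩
  rcases Nat.lt_or_ge (gridDist v T + 1) t with hclose | hfar
  · omega
  obtain ⟨w, hvw, hwT⟩ := exists_gridDist_eq_one_gridDist_eq_add_one v T
  obtain ⟨T', hT'S, hwT'⟩ := isBroadcast_one_iff.1 h w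
  have hvT' : gridDist v T' < t + 1 := (gridDist_triangle v w T').trans_lt (by omega)
  have hne : T ≠ T' := by rintro rfl; omega
  calc 3 ≤ (t + 1 - gridDist v T) + (t + 1 - gridDist v T') := by omega
    _ = ∑ X ∈ {T, T'}, (t + 1 - gridDist v X) := by rw [sum_pair hne]
    _ ≤ totalSignal (t + 1) S v := sum_le_totalSignal <| by
      simp only [mem_insert, mem_singleton]
      rintro X (rfl | rfl)
      exacts [⟨hTS, by omega⟩, ⟨hT'S, hvT'⟩]

lemma eq_zero_of_abs_add_abs_le_of_dvd {r a b : ℤ} (hr : 0 ≤ r) (hab : |a| + |b| ≤ 2 * r)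
    (hd : 2 * r ^ 2 + 2 * r + 1 ∣ a - (2 * r + 1) * b) : a = 0 ∧ b = 0 := by
  obtain ⟨q, hq⟩ := hd
  have hq1 : |q| ≤ 1 := by
    have : (2 * r ^ 2 + 2 * r + 1) * |q| ≤ (2 * r + 1) * (2 * r) :=
      calc (2 * r ^ 2 + 2 * r + 1) * |q| = |a - (2 * r + 1) * b| := by
            rw [hq, abs_mul, abs_of_pos (show 0 < 2 * r ^ 2 + 2 * r + 1 by positivity)]
        _ ≤ |a| + (2 * r + 1) * |b| := by
            refine (abs_sub _ _).trans ?_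
            rw [abs_mul, abs_of_pos (show 0 < 2 * r + 1 by omega)]
        _ ≤ (2 * r + 1) * (2 * r) := by nlinarith [abs_nonneg a, abs_nonneg b]
    nlinarith [abs_nonneg q]
  have ha := le_abs_self a; have ha' := neg_abs_le a
  have hb := le_abs_self b; have hb' := neg_abs_le b
  rcases abs_le.1 hq1 with ⟨hq_lo, hq_hi⟩
  -- for `q = ±1`, one of `|a - b|`, `|a + b|` (both `≤ |a| + |b|`) exceeds `2r`
  interval_cases q
  · rcases le_or_gt b r with h | h
    · nlinarith [mul_nonneg hr (sub_nonneg.2 h)]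
    · nlinarith [mul_nonneg (by omega : 0 ≤ r + 1) (by omega : 0 ≤ b - r - 1)]
  · have hb0 : b = 0 := by rcases lt_trichotomy b 0 with h | h | h <;> nlinarith
    subst hb0
    exact ⟨by simpa using hq, rfl⟩
  · rcases le_or_gt (-r) b with h | h
    · nlinarith [mul_nonneg hr (by omega : 0 ≤ b + r)]
    · nlinarith [mul_nonneg (by omega : 0 ≤ r + 1) (by omega : 0 ≤ -b - r - 1)]

noncomputable def diamond (r : ℕ) : Finset (ℤ × ℤ) :=
  {p ∈ Icc (-r : ℤ) r ×ˢ Icc (-r : ℤ) r | p.1.natAbs + p.2.natAbs ≤ r}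

lemma mem_diamond {r : ℕ} {p : ℤ × ℤ} : p ∈ diamond r ↔ p.1.natAbs + p.2.natAbs ≤ r := by
  simp only [diamond, mem_filter, mem_product, mem_Icc]
  omega

lemma sum_natAbs_Icc_neg (r : ℕ) : ∑ y ∈ Icc (-r : ℤ) r, y.natAbs = r * (r + 1) := by
  induction r with
  | zero => simp
  | succ r ih =>
    have hsplit : Icc (-(r + 1 : ℕ) : ℤ) (r + 1 : ℕ) =
        insert (-(r + 1 : ℤ)) (insert (r + 1 : ℤ) (Icc (-r : ℤ) r)) := by
      ext x; simp only [mem_Icc, mem_insert]; omega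
    rw [hsplit, sum_insert (by simp only [mem_Icc, mem_insert]; omega),
      sum_insert (by simp only [mem_Icc]; omega), ih]
    have h : (-(r + 1 : ℤ)).natAbs = r + 1 := by omega
    have h' : (r + 1 : ℤ).natAbs = r + 1 := by omega
    rw [h, h']
    ring

lemma card_diamond (r : ℕ) : #(diamond r) = 2 * r ^ 2 + 2 * r + 1 := by
  have hrow : ∀ y ∈ Icc (-r : ℤ) r,
      #{x ∈ Icc (-r : ℤ) r | x.natAbs + y.natAbs ≤ r} + 2 * y.natAbs = 2 * r + 1 := by
    intro y hy
    simp only [mem_Icc] at hy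
    have : {x ∈ Icc (-r : ℤ) r | x.natAbs + y.natAbs ≤ r} =
        Icc (-(r - y.natAbs : ℕ) : ℤ) (r - y.natAbs : ℕ) := by
      ext x; simp only [mem_filter, mem_Icc]; omega
    rw [this, Int.card_Icc]
    omega
  have hsum := sum_congr rfl hrow
  rw [sum_add_distrib, ← mul_sum, sum_natAbs_Icc_neg, sum_const, Int.card_Icc, smul_eq_mul,
    show (r + 1 - -r : ℤ).toNat = 2 * r + 1 by omega] at hsum
  rw [diamond, card_filter, sum_product_right]
  simp only [← card_filter]
  nlinarith

lemma exists_mem_diamond_intCast_eq (r : ℕ) (m : ZMod (2 * r ^ 2 + 2 * r + 1)) :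
    ∃ p ∈ diamond r, ((p.1 - (2 * r + 1) * p.2 : ℤ) : ZMod (2 * r ^ 2 + 2 * r + 1)) = m := by
  set f : ℤ × ℤ → ZMod (2 * r ^ 2 + 2 * r + 1) := fun p => ((p.1 - (2 * r + 1) * p.2 : ℤ) : _)
  have hinj : Set.InjOn f (diamond r) := by
    intro p hp q hq hpq
    rw [ZMod.intCast_eq_intCast_iff_dvd_sub] at hpq
    have hp := mem_diamond.1 hp
    have hq := mem_diamond.1 hq
    have key := eq_zero_of_abs_add_abs_le_of_dvd (r := r) (a := q.1 - p.1) (b := q.2 - p.2)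
      (by positivity) (by simp only [Int.abs_eq_natAbs]; omega)
      (by convert hpq using 1 <;> push_cast <;> ring)
    exact Prod.ext (by omega) (by omega)
  have himage : (diamond r).image f = univ :=
    eq_univ_of_card _ (by rw [card_image_of_injOn hinj, card_diamond, ZMod.card])
  exact mem_image.1 (himage ▸ mem_univ m)

lemma mem_stdPattern_iff {d e : ℤ} {p : ℤ × ℤ} : p ∈ stdPattern d e ↔ p.1 ≡ e * p.2 [ZMOD d] := by
  rw [Int.modEq_comm, Int.modEq_iff_dvd]
  constructor
  · rintro ⟨x, y, rfl⟩
    exact ⟨x, by ring⟩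
  · rintro ⟨x, hx⟩
    exact ⟨x, p.2, Prod.ext (by linarith) rfl⟩

lemma exists_mem_stdPattern_gridDist_le (r : ℕ) (v : ℤ × ℤ) :
    ∃ T ∈ stdPattern (2 * r ^ 2 + 2 * r + 1) (2 * r + 1), gridDist v T ≤ r := by
  obtain ⟨p, hp, hpv⟩ := exists_mem_diamond_intCast_eq r (v.1 - (2 * r + 1) * v.2 : ℤ)
  refine ⟨(v.1 - p.1, v.2 - p.2), ?_, ?_⟩
  · rw [ZMod.intCast_eq_intCast_iff_dvd_sub] at hpv
    rw [mem_stdPattern_iff, Int.modEq_comm, Int.modEq_iff_dvd]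
    convert hpv using 1 <;> push_cast <;> ring
  · have := mem_diamond.1 hp
    unfold gridDist
    omega

lemma le_mul_ceil_div_lt {d : ℤ} (hd : 0 < d) (z : ℤ) :
    z ≤ d * ⌈(z : ℚ) / d⌉ ∧ d * ⌈(z : ℚ) / d⌉ < z + d := by
  have hdq : (0 : ℚ) < d := by exact_mod_cast hd
  have h1 : (z : ℚ) ≤ d * ⌈(z : ℚ) / d⌉ := by
    rw [mul_comm, ← div_le_iff₀ hdq]
    exact Int.le_ceil _
  have h2 : (d * ⌈(z : ℚ) / d⌉ : ℚ) < z + d :=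
    calc (d * ⌈(z : ℚ) / d⌉ : ℚ) < d * ((z : ℚ) / d + 1) :=
          mul_lt_mul_of_pos_left (Int.ceil_lt_add_one _) hdq
      _ = z + d := by field_simp
  exact ⟨by exact_mod_cast h1, by exact_mod_cast h2⟩

lemma abs_mul_card_filter_modEq_sub_le {d : ℤ} (hd : 0 < d) {a b : ℤ} (hab : a ≤ b) (c : ℤ) :
    |d * #{x ∈ Ico a b | x ≡ c [ZMOD d]} - (b - a)| ≤ d := by
  rw [Int.Ico_filter_modEq_card _ _ hd]
  have hmono : ⌈((a - c : ℤ) : ℚ) / d⌉ ≤ ⌈((b - c : ℤ) : ℚ) / d⌉ :=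
    Int.ceil_le_ceil (div_le_div_of_nonneg_right (by exact_mod_cast (by omega)) (by positivity))
  push_cast at hmono
  rw [max_eq_left (by omega)]
  have ha := le_mul_ceil_div_lt hd (a - c)
  have hb := le_mul_ceil_div_lt hd (b - c)
  push_cast at ha hb
  rw [abs_le]
  constructor <;> nlinarith

open Classical in
lemma gridCount_eq_sum (S : Set (ℤ × ℤ)) (n : ℕ) :
    gridCount S n = ∑ y ∈ Icc (-n : ℤ) n, #{x ∈ Icc (-n : ℤ) n | (x, y) ∈ S} := by
  rw [gridCount, card_filter, sum_product_right]
  simp only [card_filter]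

lemma abs_mul_gridCount_stdPattern_sub_le {d : ℤ} (hd : 0 < d) (e : ℤ) (n : ℕ) :
    |d * gridCount (stdPattern d e) n - (2 * n + 1) ^ 2| ≤ d * (2 * n + 1) := by
  classical
  have hIcc : Icc (-n : ℤ) n = Ico (-n : ℤ) (n + 1) := by ext; simp only [mem_Icc, mem_Ico]; omega
  have hcard : (#(Icc (-n : ℤ) n) : ℤ) = 2 * n + 1 := by rw [Int.card_Icc]; omega
  have hrow (y : ℤ) : |d * #{x ∈ Icc (-n : ℤ) n | x ≡ e * y [ZMOD d]} - (2 * n + 1)| ≤ d := by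
    simpa [hIcc, two_mul, add_assoc, add_comm] using
      abs_mul_card_filter_modEq_sub_le hd (by omega : (-n : ℤ) ≤ n + 1) (e * y)
  calc |d * gridCount (stdPattern d e) n - (2 * n + 1) ^ 2|
      = |∑ y ∈ Icc (-n : ℤ) n, (d * #{x ∈ Icc (-n : ℤ) n | x ≡ e * y [ZMOD d]} - (2 * n + 1))| := by
        rw [sum_sub_distrib, sum_const, nsmul_eq_mul, hcard, ← mul_sum, gridCount_eq_sum, sq]
        simp only [mem_stdPattern_iff]
        push_cast
        rfl
    _ ≤ ∑ y ∈ Icc (-n : ℤ) n, d := (abs_sum_le_sum_abs _ _).trans (sum_le_sum fun y _ => hrow y)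
    _ = d * (2 * n + 1) := by rw [sum_const, nsmul_eq_mul, hcard, mul_comm]

lemma tendsto_gridCount_stdPattern {d : ℤ} (hd : 0 < d) (e : ℤ) :
    Tendsto (fun n : ℕ => (gridCount (stdPattern d e) n : ℝ) / (2 * n + 1) ^ 2) atTop
      (𝓝 (1 / (d : ℝ))) := by
  refine tendsto_iff_norm_sub_tendsto_zero.2 <| squeeze_zero (fun _ => norm_nonneg _)
    (fun n => ?_) tendsto_one_div_add_atTop_nhds_zero_nat
  have hbound :
      |(d : ℝ) * gridCount (stdPattern d e) n - (2 * n + 1) ^ 2| ≤ (d : ℝ) * (2 * n + 1) := by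
    exact_mod_cast abs_mul_gridCount_stdPattern_sub_le hd e n
  calc ‖(gridCount (stdPattern d e) n : ℝ) / (2 * n + 1) ^ 2 - 1 / (d : ℝ)‖
      = |(d : ℝ) * gridCount (stdPattern d e) n - (2 * n + 1) ^ 2| /
          ((d : ℝ) * (2 * n + 1) ^ 2) := by
        rw [Real.norm_eq_abs, ← abs_of_pos (by positivity : (0 : ℝ) < d * (2 * n + 1) ^ 2),
          ← abs_div]
        congr 1
        field_simp
    _ ≤ (d : ℝ) * (2 * n + 1) / ((d : ℝ) * (2 * n + 1) ^ 2) := by gcongr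
    _ = 1 / (2 * n + 1) := by field_simp
    _ ≤ 1 / (n + 1) := by gcongr; linarith

theorem stmt9 (t : ℕ) (ht : 2 ≤ t) :
    ∃ (S : Set (ℤ × ℤ)) (L : ℝ), IsBroadcast t 3 S ∧
      Filter.Tendsto (fun n : ℕ => (gridCount S n : ℝ) / (2 * n + 1) ^ 2)
        Filter.atTop (nhds L) ∧
      L ≤ 1 / (2 * ((t : ℝ) - 1) ^ 2 - 2 * ((t : ℝ) - 1) + 1) := by
  obtain ⟨r, rfl⟩ : ∃ r, t = r + 2 := ⟨t - 2, by omega⟩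
  have hd : (0 : ℤ) < 2 * r ^ 2 + 2 * r + 1 := by positivity
  refine ⟨_, _, ?_, tendsto_gridCount_stdPattern hd (2 * r + 1), le_of_eq ?_⟩
  · refine IsBroadcast.succ_three_of_one <| isBroadcast_one_iff.2 fun v => ?_
    obtain ⟨T, hT, hvT⟩ := exists_mem_stdPattern_gridDist_le r v
    exact ⟨T, hT, by omega⟩
  · push_cast
    ring
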